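/- For every d ≥ 3, the integral ∫_{[0,1]^d} ζ_d(p)^{−1} dp is finite; consequently sup_{λ > 0} I_λ = sup_{λ > 0} ∫_{[0,1]^d} (λ + ζ_d(p))^{−1} dp < ∞. (Boundedness of I_λ in dimensions three and higher.) -/

import Mathlib

open MeasureTheory Real

noncomputable section

/-- The unit cube `[0,1]^d ⊂ ℝ^d`. -/
def cube (d : ℕ) : Set (Fin d → ℝ) := Set.univ.pi fun _ => Set.Icc 0 1

/-- The symbol `ζ_d(p) = 1 − (1/d) Σ_{j=1}^d cos(2π p_j)`. -/
def zeta (d : ℕ) (p : Fin d → ℝ) : ℝ :=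
  1 - (1 / (d : ℝ)) * ∑ j, Real.cos (2 * π * p j)

lemma zeta_eq (d : ℕ) (hd : d ≠ 0) (p : Fin d → ℝ) :
    zeta d p = (2 / (d : ℝ)) * ∑ j, Real.sin (π * p j) ^ 2 := by
  have hd0 : (d : ℝ) ≠ 0 := Nat.cast_ne_zero.2 hd
  have hcos : ∀ j, Real.cos (2 * π * p j) = 1 - 2 * Real.sin (π * p j) ^ 2 := by
    intro j
    have h1 : 2 * π * p j = 2 * (π * p j) := by ring
    have h2 := Real.cos_two_mul (π * p j)
    have h3 := Real.sin_sq_add_cos_sq (π * p j)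
    rw [h1, h2]; nlinarith
  have hsum : ∑ j, Real.cos (2 * π * p j)
      = (d : ℝ) - 2 * ∑ j, Real.sin (π * p j) ^ 2 := by
    simp only [hcos]
    rw [Finset.sum_sub_distrib, Finset.sum_const, Finset.card_univ, Fintype.card_fin,
      ← Finset.mul_sum]
    push_cast; ring
  unfold zeta
  rw [hsum]
  field_simp
  ring

lemma zeta_continuous (d : ℕ) : Continuous (zeta d) := by
  unfold zeta
  exact continuous_const.sub (continuous_const.mul (continuous_finset_sum _ fun j _ =>
    Real.continuous_cos.comp (continuous_const.mul (continuous_apply j))))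

lemma zeta_nonneg (d : ℕ) (hd : d ≠ 0) (p : Fin d → ℝ) : 0 ≤ zeta d p := by
  have hd0 : (0 : ℝ) < d := by exact_mod_cast Nat.pos_of_ne_zero hd
  have hsum : ∑ j, Real.cos (2 * π * p j) ≤ (d : ℝ) := by
    calc ∑ j, Real.cos (2 * π * p j) ≤ ∑ _j : Fin d, (1 : ℝ) :=
          Finset.sum_le_sum fun j _ => Real.cos_le_one _
      _ = (d : ℝ) := by simp
  unfold zeta
  rw [sub_nonneg]
  rw [div_mul_eq_mul_div, one_mul, div_le_one hd0]
  exact hsum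

lemma zeta_lower (d : ℕ) (hd : d ≠ 0) (p : Fin d → ℝ)
    (hp : ∀ j, 0 < Real.sin (π * p j)) :
    2 * ∏ j, Real.sin (π * p j) ^ ((2 : ℝ) / d) ≤ zeta d p := by
  have hd0 : (0 : ℝ) < d := by exact_mod_cast Nat.pos_of_ne_zero hd
  have amgm := Real.geom_mean_le_arith_mean_weighted Finset.univ
    (fun _ : Fin d => 1 / (d : ℝ)) (fun j => Real.sin (π * p j) ^ 2)
    (fun i _ => by positivity)
    (by simp [Finset.card_univ]; field_simp)
    (fun i _ => by positivity)
  have hprod : ∀ j : Fin d, (Real.sin (π * p j) ^ 2) ^ ((1 : ℝ) / d)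
      = Real.sin (π * p j) ^ ((2 : ℝ) / d) := by
    intro j
    rw [← Real.rpow_natCast (Real.sin (π * p j)) 2, ← Real.rpow_mul (hp j).le]
    norm_num [div_eq_mul_inv]
  rw [zeta_eq d hd p]
  calc 2 * ∏ j, Real.sin (π * p j) ^ ((2 : ℝ) / d)
      = 2 * ∏ j, (Real.sin (π * p j) ^ 2) ^ ((1 : ℝ) / d) := by
        simp only [hprod]
    _ ≤ 2 * ∑ j, (1 / (d : ℝ)) * Real.sin (π * p j) ^ 2 := by linarith
    _ = (2 / (d : ℝ)) * ∑ j, Real.sin (π * p j) ^ 2 := by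
        rw [← Finset.mul_sum]; ring

lemma zeta_pos (d : ℕ) (hd : d ≠ 0) (p : Fin d → ℝ)
    (hp : ∀ j, 0 < Real.sin (π * p j)) : 0 < zeta d p := by
  refine lt_of_lt_of_le ?_ (zeta_lower d hd p hp)
  have : 0 < ∏ j, Real.sin (π * p j) ^ ((2 : ℝ) / d) :=
    Finset.prod_pos fun j _ => Real.rpow_pos_of_pos (hp j) _
  linarith

lemma zeta_inv_le (d : ℕ) (hd : d ≠ 0) (p : Fin d → ℝ)
    (hp : ∀ j, 0 < Real.sin (π * p j)) :
    (zeta d p)⁻¹ ≤ (1 / 2) * ∏ j, |Real.sin (π * p j)| ^ (-((2 : ℝ) / d)) := by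
  have hprodpos : 0 < ∏ j, Real.sin (π * p j) ^ ((2 : ℝ) / d) :=
    Finset.prod_pos fun j _ => Real.rpow_pos_of_pos (hp j) _
  have h1 : (zeta d p)⁻¹ ≤ (2 * ∏ j, Real.sin (π * p j) ^ ((2 : ℝ) / d))⁻¹ := by
    apply inv_anti₀ (by linarith) (zeta_lower d hd p hp)
  refine h1.trans_eq ?_
  rw [mul_inv, ← Finset.prod_inv_distrib]
  congr 1
  · norm_num
  · refine Finset.prod_congr rfl fun j _ => ?_
    rw [abs_of_pos (hp j), Real.rpow_neg (hp j).le]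

lemma F_integrableOn (d : ℕ) (hd : 3 ≤ d) :
    IntegrableOn (fun t : ℝ => |Real.sin (π * t)| ^ (-((2 : ℝ) / d)))
      (Set.Icc 0 1) volume := by
  have hd0 : (0 : ℝ) < d := by positivity
  have hexp : (-1 : ℝ) < -((2 : ℝ) / d) := by
    have : (2 : ℝ) / d ≤ 2 / 3 := by
      apply div_le_div_of_nonneg_left (by norm_num) (by norm_num)
      exact_mod_cast hd
    linarith
  have h1 : IntervalIntegrable (fun x : ℝ => x ^ (-((2 : ℝ) / d))) volume 0 1 :=
    intervalIntegral.intervalIntegrable_rpow' hexp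
  have h2 : IntervalIntegrable (fun x : ℝ => (1 - x) ^ (-((2 : ℝ) / d))) volume 0 1 := by
    have := (h1.comp_sub_left 1).symm
    simpa using this
  have hH : IntegrableOn
      (fun t : ℝ => t ^ (-((2 : ℝ) / d)) + (1 - t) ^ (-((2 : ℝ) / d)))
      (Set.Icc 0 1) volume := by
    rw [← intervalIntegrable_iff_integrableOn_Icc_of_le zero_le_one]
    exact h1.add h2
  have hmeas : AEStronglyMeasurable
      (fun t : ℝ => |Real.sin (π * t)| ^ (-((2 : ℝ) / d)))
      (volume.restrict (Set.Icc 0 1)) := by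
    apply Measurable.aestronglyMeasurable
    exact ((Real.continuous_sin.comp (continuous_const.mul continuous_id)).abs.measurable).pow_const _
  refine hH.mono' hmeas ?_
  rw [← Measure.restrict_congr_set Ioo_ae_eq_Icc]
  filter_upwards [ae_restrict_mem (measurableSet_Ioo (a := (0:ℝ)) (b := 1))] with t ht
  obtain ⟨ht0, ht1⟩ := ht
  have hmin : min t (1 - t) ≤ Real.sin (π * t) := by
    rcases le_or_gt t (1 / 2) with h | h
    · have hx0 : 0 ≤ π * t := by positivity
      have hx1 : π * t ≤ π / 2 := by
        rw [div_eq_mul_inv]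
        nlinarith [Real.pi_pos]
      have := Real.mul_le_sin hx0 hx1
      have h2t : 2 / π * (π * t) = 2 * t := by
        field_simp
      rw [h2t] at this
      calc min t (1 - t) ≤ t := min_le_left _ _
        _ ≤ 2 * t := by linarith
        _ ≤ Real.sin (π * t) := this
    · have hx0 : 0 ≤ π * (1 - t) := by nlinarith [Real.pi_pos]
      have hx1 : π * (1 - t) ≤ π / 2 := by nlinarith [Real.pi_pos]
      have := Real.mul_le_sin hx0 hx1
      have h2t : 2 / π * (π * (1 - t)) = 2 * (1 - t) := by
        field_simp
      rw [h2t] at this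
      have hsin : Real.sin (π * (1 - t)) = Real.sin (π * t) := by
        rw [show π * (1 - t) = π - π * t by ring, Real.sin_pi_sub]
      rw [hsin] at this
      calc min t (1 - t) ≤ 1 - t := min_le_right _ _
        _ ≤ 2 * (1 - t) := by linarith
        _ ≤ Real.sin (π * t) := this
  have hminpos : 0 < min t (1 - t) := lt_min ht0 (by linarith)
  have hsinpos : 0 < Real.sin (π * t) := lt_of_lt_of_le hminpos hmin
  have hFle : |Real.sin (π * t)| ^ (-((2 : ℝ) / d))
      ≤ t ^ (-((2 : ℝ) / d)) + (1 - t) ^ (-((2 : ℝ) / d)) := by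
    rw [abs_of_pos hsinpos]
    have hstep : Real.sin (π * t) ^ (-((2 : ℝ) / d))
        ≤ (min t (1 - t)) ^ (-((2 : ℝ) / d)) :=
      Real.rpow_le_rpow_of_nonpos hminpos hmin (neg_nonpos.2 (by positivity))
    refine hstep.trans ?_
    rcases min_cases t (1 - t) with ⟨hm, _⟩ | ⟨hm, _⟩
    · rw [hm]
      have : (0 : ℝ) ≤ (1 - t) ^ (-((2 : ℝ) / d)) := Real.rpow_nonneg (by linarith) _
      linarith
    · rw [hm]
      have : (0 : ℝ) ≤ t ^ (-((2 : ℝ) / d)) := Real.rpow_nonneg ht0.le _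
      linarith
  rw [Real.norm_eq_abs, abs_of_nonneg (Real.rpow_nonneg (abs_nonneg _) _)]
  exact hFle

lemma cube_measurable (d : ℕ) : MeasurableSet (cube d) :=
  MeasurableSet.univ_pi fun _ => measurableSet_Icc

/-- For `d ≥ 3` the integral `∫_{[0,1]^d} ζ_d(p)⁻¹ dp` is finite; consequently
`sup_{λ > 0} I_λ = sup_{λ > 0} ∫_{[0,1]^d} (λ + ζ_d(p))⁻¹ dp < ∞`. -/
theorem I_lambda_bounded_high_dim (d : ℕ) (hd : 3 ≤ d) :
    (∫⁻ p in cube d, ENNReal.ofReal ((zeta d p)⁻¹)) < ⊤ ∧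
    IntegrableOn (fun p => (zeta d p)⁻¹) (cube d) volume ∧
    ∃ C : ℝ, ∀ lam : ℝ, 0 < lam →
      (∫ p in cube d, (lam + zeta d p)⁻¹) ≤ C := by
  have hd0 : d ≠ 0 := by omega
  -- the dominating product function
  set F : ℝ → ℝ := fun t => |Real.sin (π * t)| ^ (-((2 : ℝ) / d)) with hF
  have hFind : Integrable (fun x : Fin d → ℝ =>
      ∏ j, (Set.Icc (0 : ℝ) 1).indicator F (x j)) volume :=
    Integrable.fintype_prod fun _ =>
      (integrable_indicator_iff measurableSet_Icc).2 (F_integrableOn d hd)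
  have hg : Integrable (fun x : Fin d → ℝ =>
      (1 / 2 : ℝ) * ∏ j, (Set.Icc (0 : ℝ) 1).indicator F (x j)) volume :=
    hFind.const_mul _
  -- a.e. on the cube, all coordinates lie in the open interval
  have hnull : volume (⋃ j : Fin d,
      ({p : Fin d → ℝ | p j = 0} ∪ {p : Fin d → ℝ | p j = 1})) = 0 := by
    refine measure_iUnion_null fun j => measure_union_null ?_ ?_ <;>
      · rw [volume_pi]; exact Measure.pi_hyperplane _ j _
  have h_good : ∀ᵐ p ∂(volume.restrict (cube d)), ∀ j, p j ∈ Set.Ioo (0 : ℝ) 1 := by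
    have h1 : ∀ᵐ p ∂(volume.restrict (cube d)), p ∈ cube d :=
      ae_restrict_mem (cube_measurable d)
    have h2 : ∀ᵐ p : Fin d → ℝ ∂volume, p ∉ ⋃ j : Fin d,
        ({p : Fin d → ℝ | p j = 0} ∪ {p : Fin d → ℝ | p j = 1}) :=
      compl_mem_ae_iff.2 hnull
    filter_upwards [h1, ae_restrict_of_ae h2] with p hp hp2 j
    have hpj : p j ∈ Set.Icc (0 : ℝ) 1 := hp j (Set.mem_univ j)
    have hne : p j ≠ 0 ∧ p j ≠ 1 := by
      constructor <;> intro h <;> exact hp2 (Set.mem_iUnion.2 ⟨j, by simp [h]⟩)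
    exact ⟨lt_of_le_of_ne hpj.1 (Ne.symm hne.1), lt_of_le_of_ne hpj.2 hne.2⟩
  have hsin_of_good : ∀ p : Fin d → ℝ, (∀ j, p j ∈ Set.Ioo (0 : ℝ) 1) →
      ∀ j, 0 < Real.sin (π * p j) := by
    intro p hp j
    refine Real.sin_pos_of_pos_of_lt_pi ?_ ?_
    · have := (hp j).1; positivity
    · have := (hp j).2
      nlinarith [Real.pi_pos]
  -- measurability of the inverse of zeta
  have hmeas : AEStronglyMeasurable (fun p => (zeta d p)⁻¹)
      (volume.restrict (cube d)) :=
    ((zeta_continuous d).measurable.inv).aestronglyMeasurable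
  -- integrability of the inverse of zeta on the cube
  have h_int : IntegrableOn (fun p => (zeta d p)⁻¹) (cube d) volume := by
    refine (hg.restrict (s := cube d)).mono' hmeas ?_
    filter_upwards [h_good, ae_restrict_mem (cube_measurable d)] with p hp hpc
    have hsin := hsin_of_good p hp
    have hzpos := zeta_pos d hd0 p hsin
    have hkey := zeta_inv_le d hd0 p hsin
    rw [Real.norm_eq_abs, abs_of_pos (inv_pos.2 hzpos)]
    refine hkey.trans_eq ?_
    congr 1
    refine Finset.prod_congr rfl fun j _ => ?_
    rw [Set.indicator_of_mem (hpc j (Set.mem_univ j))]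
  refine ⟨h_int.setLIntegral_lt_top, h_int, ?_⟩
  -- part 3
  refine ⟨∫ p in cube d, (zeta d p)⁻¹, fun lam hlam => ?_⟩
  have hcont : Continuous fun p : Fin d → ℝ => (lam + zeta d p)⁻¹ := by
    refine (continuous_const.add (zeta_continuous d)).inv₀ fun p => ?_
    have := zeta_nonneg d hd0 p
    exact ne_of_gt (by simp only [Pi.add_apply]; linarith)
  have hint3 : IntegrableOn (fun p => (lam + zeta d p)⁻¹) (cube d) volume :=
    hcont.continuousOn.integrableOn_compact
      (isCompact_univ_pi fun _ => isCompact_Icc)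
  refine integral_mono_ae hint3 h_int ?_
  filter_upwards [h_good] with p hp
  have hzpos := zeta_pos d hd0 p (hsin_of_good p hp)
  exact inv_anti₀ hzpos (by linarith)

end
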